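/- arXiv:2505.21161 — 3 statements merged into one kernel-verified Lean document; each statement's English description precedes it below -/
import Mathlib

section
/- Let l_e ≥ w_e > 0 and l_o ≥ w_o > 0, let N_{c,e}, N_{c,o} ≥ 1 be integers, and let μ be a Borel probability measure on the configuration space ℝ² × ℝ. Let the ego footprint be Rect(l_e, w_e) (configuration (0,0,0)) with multi-circle cover BC_e = BC((0,0); l_e, w_e, N_{c,e}), and for each configuration y = (x, θ) ∈ ℝ² × ℝ let the object footprint be S(y; l_o, w_o) with multi-circle cover BC_o(y) = BC(y; l_o, w_o, N_{c,o}). Then μ{ y ∈ ℝ² × ℝ : Rect(l_e, w_e) ∩ S(y; l_o, w_o) ≠ ∅ } ≤ μ{ y ∈ ℝ² × ℝ : BC_e ∩ BC_o(y) ≠ ∅ }, both sets being Borel measurable. -/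
open Real Set

/-- Euclidean norm on `ℝ × ℝ`. -/
noncomputable def enorm2 (p : ℝ × ℝ) : ℝ := Real.sqrt (p.1 ^ 2 + p.2 ^ 2)

/-- Closed Euclidean ball in `ℝ × ℝ` with center `c` and radius `r`. -/
noncomputable def cball (c : ℝ × ℝ) (r : ℝ) : Set (ℝ × ℝ) := {p | enorm2 (p - c) ≤ r}

/-- Unit heading vector `u(θ) = (cos θ, sin θ)`. -/
noncomputable def uvec (θ : ℝ) : ℝ × ℝ := (Real.cos θ, Real.sin θ)

/-- Rotation of a point of `ℝ × ℝ` by angle `θ` about the origin. -/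
noncomputable def rot2 (θ : ℝ) (p : ℝ × ℝ) : ℝ × ℝ :=
  (Real.cos θ * p.1 - Real.sin θ * p.2, Real.sin θ * p.1 + Real.cos θ * p.2)

/-- Closed axis-aligned rectangle `[−l/2, l/2] × [−w/2, w/2]`. -/
def Rect (l w : ℝ) : Set (ℝ × ℝ) := Set.Icc (-(l / 2)) (l / 2) ×ˢ Set.Icc (-(w / 2)) (w / 2)

/-- Oriented footprint: image of `Rect l w` under rotation by `θ` followed by translation by `x`. -/
noncomputable def footprint (x : ℝ × ℝ) (θ l w : ℝ) : Set (ℝ × ℝ) :=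
  (fun p => x + rot2 θ p) '' Rect l w

/-- Common radius of the multi-circle cover. -/
noncomputable def circRadius (l w : ℝ) (Nc : ℕ) : ℝ :=
  Real.sqrt ((l / (2 * Nc)) ^ 2 + w ^ 2 / 4)

/-- Spacing of the circle centers of the multi-circle cover. -/
noncomputable def circSpacing (l w : ℝ) (Nc : ℕ) : ℝ :=
  2 * Real.sqrt (circRadius l w Nc ^ 2 - w ^ 2 / 4)

/-- Multi-circle cover of the footprint with configuration `(x, θ)`:
`N_c` closed balls of radius `circRadius` centered at `x + L_i • u(θ)` with
`L_i = (2i − N_c − 1) d_c / 2`, `i = 1, …, N_c`. -/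
noncomputable def multiCircle (x : ℝ × ℝ) (θ l w : ℝ) (Nc : ℕ) : Set (ℝ × ℝ) :=
  ⋃ i ∈ Finset.Icc 1 Nc,
    cball (x + ((2 * (i : ℝ) - Nc - 1) * circSpacing l w Nc / 2) • uvec θ)
      (circRadius l w Nc)

/-!
Cut `[-l/2, l/2]` into `N_c` cells of length `l/N_c`, so that `d_c = l/N_c` and the offsets `L_i`
are the cell centres. A point of `Rect(l, w)` is within `l/(2N_c)` horizontally and `w/2`
vertically of the centre of its cell, hence within `r` of it: the circles cover the rectangle.
A rigid motion carries this cover of `Rect(l, w)` to the cover of any footprint, so the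
rectangle collision set lies inside the circle collision set. Both collision sets are closed,
being projections of closed sets along a compact factor.
-/

section CompactProjection

variable {X Y Z : Type*} [TopologicalSpace X] [TopologicalSpace Y] [TopologicalSpace Z]

theorem IsCompact.isClosed_setOf_exists_mem {K : Set Y} (hK : IsCompact K) {C : Set (X × Y)}
    (hC : IsClosed C) : IsClosed {x | ∃ y ∈ K, (x, y) ∈ C} := by
  have : CompactSpace K := isCompact_iff_compactSpace.mp hK
  convert isClosedMap_fst_of_compactSpace (X := X) (Y := K) _
    (hC.preimage (continuous_id.prodMap continuous_subtype_val)) using 1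
  ext x
  simp [Subtype.exists]

theorem IsCompact.isClosed_setOf_inter_nonempty {K : Set Y} (hK : IsCompact K) {B : X → Set Y}
    (hB : IsClosed {p : X × Y | p.2 ∈ B p.1}) : IsClosed {x | (K ∩ B x).Nonempty} :=
  hK.isClosed_setOf_exists_mem hB

theorem IsCompact.isClosed_setOf_mem_image [T2Space Z] {K : Set Y} (hK : IsCompact K)
    {g : X → Y → Z} (hg : Continuous (Function.uncurry g)) :
    IsClosed {p : X × Z | p.2 ∈ g p.1 '' K} := by
  have hgraph : IsClosed {q : (X × Z) × Y | g q.1.1 q.2 = q.1.2} :=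
    isClosed_eq (hg.comp (continuous_fst.fst.prodMk continuous_snd)) continuous_fst.snd
  simpa only [Set.mem_image, Set.mem_ofPred_eq] using hK.isClosed_setOf_exists_mem hgraph

end CompactProjection

lemma norm_le_enorm2 (p : ℝ × ℝ) : ‖p‖ ≤ enorm2 p :=
  max_le (Real.abs_le_sqrt (by nlinarith)) (Real.abs_le_sqrt (by nlinarith))

lemma continuous_enorm2 : Continuous enorm2 := by
  unfold enorm2
  fun_prop

lemma rot2_sub (θ : ℝ) (p q : ℝ × ℝ) : rot2 θ (p - q) = rot2 θ p - rot2 θ q := by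
  simp only [rot2, Prod.fst_sub, Prod.snd_sub, Prod.mk_sub_mk]
  congr 1 <;> ring

lemma rot2_smul (θ c : ℝ) (p : ℝ × ℝ) : rot2 θ (c • p) = c • rot2 θ p := by
  simp only [rot2, Prod.smul_fst, Prod.smul_snd, Prod.smul_mk, smul_eq_mul]
  congr 1 <;> ring

lemma rot2_uvec (θ φ : ℝ) : rot2 θ (uvec φ) = uvec (θ + φ) := by
  simp only [rot2, uvec, Real.cos_add, Real.sin_add]

lemma enorm2_rot2 (θ : ℝ) (p : ℝ × ℝ) : enorm2 (rot2 θ p) = enorm2 p := by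
  simp only [enorm2, rot2]
  congr 1
  linear_combination (p.1 ^ 2 + p.2 ^ 2) * Real.sin_sq_add_cos_sq θ

lemma circSpacing_eq {l : ℝ} (hl : 0 ≤ l) (w : ℝ) (Nc : ℕ) :
    circSpacing l w Nc = 2 * (l / (2 * Nc)) := by
  rw [circSpacing, circRadius, Real.sq_sqrt (by positivity), add_sub_cancel_right,
    Real.sqrt_sq (by positivity)]

lemma exists_abs_sub_center_le {s a : ℝ} (hs : 0 ≤ s) {N : ℕ} (hN : 1 ≤ N)
    (ha : |a| ≤ N * s) : ∃ i ∈ Finset.Icc 1 N, |a - (2 * i - N - 1) * s| ≤ s := by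
  rcases hs.eq_or_lt with rfl | hs
  · exact ⟨1, Finset.mem_Icc.mpr ⟨le_rfl, hN⟩, by simpa using ha⟩
  rw [abs_le] at ha
  -- `t ∈ [0, N]` is the position of `a + N s` counted in cells of length `2 s`
  set t := (a + N * s) / (2 * s) with ht
  have hat : a = 2 * s * t - N * s := by rw [ht]; field_simp; ring
  have ht0 : 0 ≤ t := div_nonneg (by linarith) (by positivity)
  have htN : t ≤ N := by rw [ht, div_le_iff₀ (by positivity)]; linarith
  refine ⟨max 1 ⌈t⌉₊, Finset.mem_Icc.mpr ⟨le_max_left _ _, max_le hN (Nat.ceil_le.mpr htN)⟩, ?_⟩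
  have hti : t ≤ (max 1 ⌈t⌉₊ : ℕ) :=
    (Nat.le_ceil t).trans (by exact_mod_cast le_max_right 1 ⌈t⌉₊)
  have hit : ((max 1 ⌈t⌉₊ : ℕ) : ℝ) ≤ t + 1 := by
    push_cast
    exact max_le (by linarith) (Nat.ceil_lt_add_one ht0).le
  rw [abs_le, hat]
  constructor <;> nlinarith

lemma rect_subset_multiCircle {l : ℝ} (hl : 0 ≤ l) (w : ℝ) {Nc : ℕ} (hNc : 1 ≤ Nc) :
    Rect l w ⊆ multiCircle (0, 0) 0 l w Nc := by
  rintro p ⟨⟨hx₁, hx₂⟩, hy₁, hy₂⟩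
  have hNc' : (0 : ℝ) < Nc := by exact_mod_cast hNc
  have hx : |p.1| ≤ Nc * (l / (2 * Nc)) := by
    rw [abs_le]; field_simp; exact ⟨by linarith, by linarith⟩
  have hy : p.2 ^ 2 ≤ w ^ 2 / 4 := by nlinarith
  obtain ⟨i, hi, hxi⟩ := exists_abs_sub_center_le (by positivity) hNc hx
  refine Set.mem_biUnion hi ?_
  show Real.sqrt _ ≤ Real.sqrt _
  refine Real.sqrt_le_sqrt ?_
  simp only [Prod.mk_zero_zero, zero_add, uvec, Real.cos_zero, Real.sin_zero, circSpacing_eq hl,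
    Prod.smul_mk, smul_eq_mul, mul_one, mul_zero, Prod.fst_sub, Prod.snd_sub, sub_zero]
  rw [mul_div_assoc, mul_div_cancel_left₀ _ two_ne_zero, ← sq_abs (p.1 - _)]
  gcongr

lemma image_multiCircle_subset (x : ℝ × ℝ) (θ l w : ℝ) (Nc : ℕ) :
    (fun p => x + rot2 θ p) '' multiCircle (0, 0) 0 l w Nc ⊆ multiCircle x θ l w Nc := by
  rintro _ ⟨p, hp, rfl⟩
  simp only [multiCircle, Set.mem_iUnion] at hp ⊢
  obtain ⟨i, hi, hp⟩ := hp
  refine ⟨i, hi, ?_⟩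
  simp only [cball, Set.mem_ofPred_eq, Prod.mk_zero_zero, zero_add] at hp ⊢
  rw [← enorm2_rot2 θ, rot2_sub, rot2_smul, rot2_uvec, add_zero] at hp
  rwa [add_sub_add_left_eq_sub]

lemma footprint_subset_multiCircle (x : ℝ × ℝ) (θ : ℝ) {l : ℝ} (hl : 0 ≤ l) (w : ℝ) {Nc : ℕ}
    (hNc : 1 ≤ Nc) : footprint x θ l w ⊆ multiCircle x θ l w Nc :=
  (Set.image_mono (rect_subset_multiCircle hl w hNc)).trans (image_multiCircle_subset x θ l w Nc)

lemma isCompact_cball (c : ℝ × ℝ) (r : ℝ) : IsCompact (cball c r) :=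
  Metric.isCompact_of_isClosed_isBounded
    (isClosed_le (continuous_enorm2.comp (continuous_id.sub continuous_const)) continuous_const)
    (Metric.isBounded_closedBall.subset fun p hp => by
      rw [Metric.mem_closedBall, dist_eq_norm]
      exact (norm_le_enorm2 _).trans hp)

lemma isCompact_multiCircle (x : ℝ × ℝ) (θ l w : ℝ) (Nc : ℕ) :
    IsCompact (multiCircle x θ l w Nc) :=
  (Finset.Icc 1 Nc).isCompact_biUnion fun _ _ => isCompact_cball _ _

lemma isCompact_rect (l w : ℝ) : IsCompact (Rect l w) :=
  isCompact_Icc.prod isCompact_Icc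

lemma isClosed_setOf_mem_multiCircle (l w : ℝ) (Nc : ℕ) :
    IsClosed {p : ((ℝ × ℝ) × ℝ) × (ℝ × ℝ) | p.2 ∈ multiCircle p.1.1 p.1.2 l w Nc} := by
  have hball (i : ℕ) : IsClosed {p : ((ℝ × ℝ) × ℝ) × (ℝ × ℝ) |
      p.2 ∈ cball (p.1.1 + ((2 * (i : ℝ) - Nc - 1) * circSpacing l w Nc / 2) • uvec p.1.2)
        (circRadius l w Nc)} :=
    isClosed_le (continuous_enorm2.comp (by unfold uvec; fun_prop)) continuous_const
  convert isClosed_biUnion_finset fun i (_ : i ∈ Finset.Icc 1 Nc) => hball i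
  ext
  simp [multiCircle]

lemma isClosed_setOf_mem_footprint (l w : ℝ) :
    IsClosed {p : ((ℝ × ℝ) × ℝ) × (ℝ × ℝ) | p.2 ∈ footprint p.1.1 p.1.2 l w} :=
  (isCompact_rect l w).isClosed_setOf_mem_image
    (g := fun (y : (ℝ × ℝ) × ℝ) p => y.1 + rot2 y.2 p) (by unfold rot2; fun_prop)

theorem poc_over_approximation_general
    (le we lo wo : ℝ) (hwe : 0 < we) (hle : we ≤ le) (hwo : 0 < wo) (hlo : wo ≤ lo)
    (Nce Nco : ℕ) (hNce : 1 ≤ Nce) (hNco : 1 ≤ Nco)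
    (μ : MeasureTheory.Measure ((ℝ × ℝ) × ℝ)) :
    MeasurableSet {y : (ℝ × ℝ) × ℝ | (Rect le we ∩ footprint y.1 y.2 lo wo).Nonempty} ∧
    MeasurableSet {y : (ℝ × ℝ) × ℝ |
      (multiCircle (0, 0) 0 le we Nce ∩ multiCircle y.1 y.2 lo wo Nco).Nonempty} ∧
    μ {y : (ℝ × ℝ) × ℝ | (Rect le we ∩ footprint y.1 y.2 lo wo).Nonempty} ≤
      μ {y : (ℝ × ℝ) × ℝ |
        (multiCircle (0, 0) 0 le we Nce ∩ multiCircle y.1 y.2 lo wo Nco).Nonempty} := by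
  refine ⟨((isCompact_rect le we).isClosed_setOf_inter_nonempty
      (isClosed_setOf_mem_footprint lo wo)).measurableSet,
    ((isCompact_multiCircle (0, 0) 0 le we Nce).isClosed_setOf_inter_nonempty
      (isClosed_setOf_mem_multiCircle lo wo Nco)).measurableSet,
    MeasureTheory.measure_mono fun y hy => hy.mono ?_⟩
  exact Set.inter_subset_inter (rect_subset_multiCircle (hwe.le.trans hle) we hNce)
    (footprint_subset_multiCircle y.1 y.2 (hwo.le.trans hlo) wo hNco)

/-- The probability (under any Borel probability measure `μ` on the configuration space
`ℝ² × ℝ`) that the object's rectangular footprint collides with the ego's rectangle is at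
most the probability that the two multi-circle covers collide; both collision sets are
Borel measurable. -/
theorem poc_over_approximation
    (le we lo wo : ℝ) (hwe : 0 < we) (hle : we ≤ le) (hwo : 0 < wo) (hlo : wo ≤ lo)
    (Nce Nco : ℕ) (hNce : 1 ≤ Nce) (hNco : 1 ≤ Nco)
    (μ : MeasureTheory.Measure ((ℝ × ℝ) × ℝ)) [MeasureTheory.IsProbabilityMeasure μ] :
    MeasurableSet {y : (ℝ × ℝ) × ℝ | (Rect le we ∩ footprint y.1 y.2 lo wo).Nonempty} ∧
    MeasurableSet {y : (ℝ × ℝ) × ℝ |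
      (multiCircle (0, 0) 0 le we Nce ∩ multiCircle y.1 y.2 lo wo Nco).Nonempty} ∧
    μ {y : (ℝ × ℝ) × ℝ | (Rect le we ∩ footprint y.1 y.2 lo wo).Nonempty} ≤
      μ {y : (ℝ × ℝ) × ℝ |
        (multiCircle (0, 0) 0 le we Nce ∩ multiCircle y.1 y.2 lo wo Nco).Nonempty} :=
  poc_over_approximation_general le we lo wo hwe hle hwo hlo Nce Nco hNce hNco μ
end

section
/- Let l ≥ w > 0 and let N_c ≥ 1 be an integer. If there exist points c_1, …, c_{N_c} on the x-axis (i.e., c_i = (a_i, 0) with a_i ∈ ℝ) and a common radius r' > 0 such that the rectangle Rect(l, w) = [−l/2, l/2] × [−w/2, w/2] is contained in ⋃_{i=1}^{N_c} B̄(c_i, r'), then r' ≥ √((l/(2N_c))² + w²/4). In other words, r = √((l/(2N_c))² + w²/4) is the smallest radius for which N_c equal closed balls centered on the central longitudinal axis can cover the rectangle. -/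
open Real Set

/-- Optimality of the covering radius: if `N_c` equal closed balls with centers on the
x-axis (the rectangle's central longitudinal axis) cover `Rect l w`, then their common
radius is at least `√((l/(2N_c))² + w²/4)`. -/
theorem smallest_covering_radius
    (l w : ℝ) (hw : 0 < w) (hlw : w ≤ l) (Nc : ℕ) (hNc : 1 ≤ Nc)
    (a : Fin Nc → ℝ) (r' : ℝ) (hr' : 0 < r')
    (hcover : Rect l w ⊆ ⋃ i : Fin Nc, cball (a i, 0) r') :
    Real.sqrt ((l / (2 * Nc)) ^ 2 + w ^ 2 / 4) ≤ r' := by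
  have hl : 0 < l := lt_of_lt_of_le hw hlw
  -- key fact: any covered top-edge point gives a distance bound
  have key : ∀ x : ℝ, x ∈ Icc (-(l / 2)) (l / 2) →
      ∃ i : Fin Nc, (x - a i) ^ 2 + w ^ 2 / 4 ≤ r' ^ 2 := by
    intro x hx
    have hmem : (x, w / 2) ∈ Rect l w := by
      constructor
      · exact hx
      · constructor <;> simp <;> linarith
    obtain ⟨S, ⟨i, rfl⟩, hS⟩ := hcover hmem
    refine ⟨i, ?_⟩
    have hS' : Real.sqrt ((x - a i) ^ 2 + (w / 2) ^ 2) ≤ r' := by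
      simpa [cball, enorm2, Prod.sub_def] using hS
    have h0 : (0:ℝ) ≤ (x - a i) ^ 2 + (w / 2) ^ 2 := by positivity
    have := Real.sq_sqrt h0
    nlinarith [pow_le_pow_left₀ (Real.sqrt_nonneg _) hS' 2]
  -- r'^2 ≥ w^2/4
  obtain ⟨i0, hi0⟩ := key 0 (by constructor <;> linarith)
  have hge : w ^ 2 / 4 ≤ r' ^ 2 := by nlinarith [sq_nonneg (0 - a i0)]
  set s := Real.sqrt (r' ^ 2 - w ^ 2 / 4) with hs
  have hs2 : s ^ 2 = r' ^ 2 - w ^ 2 / 4 := Real.sq_sqrt (by linarith)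
  have hsnn : 0 ≤ s := Real.sqrt_nonneg _
  -- covering of the interval
  have hsub : Icc (-(l / 2)) (l / 2) ⊆ ⋃ i : Fin Nc, Icc (a i - s) (a i + s) := by
    intro x hx
    obtain ⟨i, hi⟩ := key x hx
    refine mem_iUnion.2 ⟨i, ?_⟩
    have habs : |x - a i| ≤ s := by
      have : (x - a i) ^ 2 ≤ r' ^ 2 - w ^ 2 / 4 := by linarith
      calc |x - a i| = Real.sqrt ((x - a i) ^ 2) := (Real.sqrt_sq_eq_abs _).symm
        _ ≤ s := Real.sqrt_le_sqrt this
    rw [abs_le] at habs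
    constructor <;> linarith [habs.1, habs.2]
  -- measure argument
  have hmeas : MeasureTheory.volume (Icc (-(l / 2)) (l / 2)) ≤
      ∑ i : Fin Nc, MeasureTheory.volume (Icc (a i - s) (a i + s)) :=
    le_trans (MeasureTheory.measure_mono hsub) (MeasureTheory.measure_iUnion_fintype_le _ _)
  have hvol : ENNReal.ofReal l ≤ ENNReal.ofReal ((Nc : ℝ) * (2 * s)) := by
    have h1 : MeasureTheory.volume (Icc (-(l / 2)) (l / 2)) = ENNReal.ofReal l := by
      rw [Real.volume_Icc]; ring_nf
    have h2 : ∀ i : Fin Nc, MeasureTheory.volume (Icc (a i - s) (a i + s)) =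
        ENNReal.ofReal (2 * s) := by
      intro i; rw [Real.volume_Icc]; ring_nf
    rw [h1] at hmeas
    calc ENNReal.ofReal l ≤ ∑ i : Fin Nc, MeasureTheory.volume (Icc (a i - s) (a i + s)) :=
          hmeas
      _ = ∑ _i : Fin Nc, ENNReal.ofReal (2 * s) := by simp [h2]
      _ = (Nc : ℕ) • ENNReal.ofReal (2 * s) := by simp
      _ = ENNReal.ofReal ((Nc : ℝ) * (2 * s)) := by
          rw [nsmul_eq_mul, ← ENNReal.ofReal_natCast,
            ← ENNReal.ofReal_mul (by positivity)]
  have hls : l ≤ (Nc : ℝ) * (2 * s) :=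
    (ENNReal.ofReal_le_ofReal_iff (by positivity)).1 hvol
  -- conclude
  have hNpos : (0:ℝ) < Nc := by exact_mod_cast hNc
  have hdiv : l / (2 * Nc) ≤ s := by
    rw [div_le_iff₀ (by positivity)]; nlinarith
  have hsq : (l / (2 * Nc)) ^ 2 ≤ r' ^ 2 - w ^ 2 / 4 := by
    have := pow_le_pow_left₀ (by positivity : (0:ℝ) ≤ l / (2 * Nc)) hdiv 2
    linarith
  calc Real.sqrt ((l / (2 * Nc)) ^ 2 + w ^ 2 / 4) ≤ Real.sqrt (r' ^ 2) :=
        Real.sqrt_le_sqrt (by linarith)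
    _ = r' := Real.sqrt_sq hr'.le
end

section
/- Let c ∈ ℝ², r_e, r_o > 0, R = r_e + r_o, L_o > 0, and let x_o ∈ ℝ² with ρ' = ‖x_o − c‖ > 0 and polar angle φ' of x_o − c (so x_o − c = ρ'·(cos φ', sin φ')). Assume |ρ' − L_o| ≤ R ≤ ρ' + L_o, and define θ' = arccos((L_o² + ρ'² − R²)/(2·L_o·ρ')), the lower bound θ̲ = φ' + π − θ', and the upper bound θ̄ = φ' + π + θ'. Then for every θ ∈ ℝ: B̄(c, r_e) ∩ B̄(x_o + L_o·u(θ), r_o) ≠ ∅ if and only if there exists an integer m with θ + 2πm ∈ [θ̲, θ̄]. -/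
open Real Set

/-! Two closed discs meet iff their centres are at distance at most `R = r_e + r_o`. By the law
of cosines the squared distance from `c` to `x_o + L_o u(θ)` is `ρ'² + L_o² + 2 ρ' L_o cos (θ - φ')`,
so the condition reads `cos θ' ≤ cos (θ - φ' - π)` with `θ' ∈ [0, π]`; as `cos` is even,
`2π`-periodic and decreasing on `[0, π]`, this says that `θ - φ' - π` lies within `θ'` of a
multiple of `2π`. -/

theorem enorm2_eq_norm_toLp (p : ℝ × ℝ) : enorm2 p = ‖WithLp.toLp 2 p‖ := by
  rw [WithLp.prod_norm_eq_of_L2, enorm2, Real.norm_eq_abs, Real.norm_eq_abs, sq_abs, sq_abs]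
  rfl

theorem enorm2_nonneg (p : ℝ × ℝ) : 0 ≤ enorm2 p := Real.sqrt_nonneg _

theorem cball_eq_preimage_closedBall (c : ℝ × ℝ) (r : ℝ) :
    cball c r = WithLp.toLp 2 ⁻¹' Metric.closedBall (WithLp.toLp 2 c) r := by
  ext p
  rw [mem_preimage, Metric.mem_closedBall, dist_eq_norm, ← WithLp.toLp_sub,
    ← enorm2_eq_norm_toLp]
  rfl

theorem cball_inter_cball_nonempty_iff {a b : ℝ × ℝ} {ra rb : ℝ} (hra : 0 ≤ ra) (hrb : 0 ≤ rb) :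
    (cball a ra ∩ cball b rb).Nonempty ↔ enorm2 (b - a) ≤ ra + rb := by
  rw [cball_eq_preimage_closedBall, cball_eq_preimage_closedBall, ← preimage_inter,
    (WithLp.toLp_surjective 2).nonempty_preimage, ← not_disjoint_iff_nonempty_inter,
    disjoint_closedBall_closedBall_iff hra hrb, not_lt, dist_comm, dist_eq_norm,
    ← WithLp.toLp_sub, enorm2_eq_norm_toLp]

theorem enorm2_smul_uvec_add_smul_uvec_sq (ρ L φ θ : ℝ) :
    enorm2 (ρ • uvec φ + L • uvec θ) ^ 2 = ρ ^ 2 + L ^ 2 + 2 * ρ * L * cos (θ - φ) := by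
  rw [enorm2, sq_sqrt (by positivity), cos_sub]
  simp only [uvec, Prod.smul_mk, Prod.mk_add_mk, smul_eq_mul]
  linear_combination ρ ^ 2 * sin_sq_add_cos_sq φ + L ^ 2 * sin_sq_add_cos_sq θ

theorem Real.cos_le_cos_iff_exists_abs_add_le {θ β : ℝ} (h0 : 0 ≤ θ) (hπ : θ ≤ π) :
    cos θ ≤ cos β ↔ ∃ m : ℤ, |β + 2 * π * m| ≤ θ := by
  have hcos_le_iff {x : ℝ} (hx : |x| ≤ π) : cos θ ≤ cos x ↔ |x| ≤ θ := by
    rw [← cos_abs x]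
    exact strictAntiOn_cos.le_iff_ge ⟨h0, hπ⟩ ⟨abs_nonneg x, hx⟩
  have hcos_shift (m : ℤ) : cos (β + 2 * π * m) = cos β := by
    rw [mul_comm, cos_add_int_mul_two_pi]
  constructor
  · intro h
    set x := toIocMod two_pi_pos (-π) β
    have hx : |x| ≤ π := by
      obtain ⟨hx_lo, hx_hi⟩ := toIocMod_mem_Ioc two_pi_pos (-π) β
      rw [abs_le]; constructor <;> linarith
    refine ⟨-toIocDiv two_pi_pos (-π) β, ?_⟩
    have hβ : β + 2 * π * (-toIocDiv two_pi_pos (-π) β : ℤ) = x := by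
      have hdecomp := toIocMod_add_toIocDiv_zsmul two_pi_pos (-π) β
      rw [zsmul_eq_mul] at hdecomp
      push_cast; linarith
    rw [hβ, ← hcos_le_iff hx]
    rwa [← hβ, hcos_shift]
  · rintro ⟨m, hm⟩
    rw [← hcos_shift m, hcos_le_iff (hm.trans hπ)]
    exact hm

theorem sq_add_sq_add_cos_le_sq_iff {ρ L R α : ℝ} (hρ : 0 < ρ) (hL : 0 < L)
    (h1 : |ρ - L| ≤ R) (h2 : R ≤ ρ + L) :
    ρ ^ 2 + L ^ 2 + 2 * ρ * L * cos α ≤ R ^ 2 ↔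
      cos (arccos ((L ^ 2 + ρ ^ 2 - R ^ 2) / (2 * L * ρ))) ≤ cos (α - π) := by
  have hden : 0 < 2 * L * ρ := by positivity
  have hR : 0 ≤ R := (abs_nonneg _).trans h1
  have hsq : (ρ - L) ^ 2 ≤ R ^ 2 := sq_le_sq' (abs_le.mp h1).1 (abs_le.mp h1).2
  rw [cos_arccos, cos_sub_pi, div_le_iff₀ hden]
  · constructor <;> intro h <;> nlinarith
  · rw [le_div_iff₀ hden]; nlinarith
  · rw [div_le_one hden]; nlinarith

theorem contact_angle_interval_general
    (c xo : ℝ × ℝ) (re ro Lo ρ' φ' : ℝ)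
    (hre : 0 < re) (hro : 0 < ro) (hLo : 0 < Lo)
    (hρpos : 0 < ρ')
    (hφ : xo - c = ρ' • (Real.cos φ', Real.sin φ'))
    (h1 : |ρ' - Lo| ≤ re + ro) (h2 : re + ro ≤ ρ' + Lo) :
    ∀ θ : ℝ,
      (cball c re ∩ cball (xo + Lo • uvec θ) ro).Nonempty ↔
      ∃ m : ℤ, θ + 2 * π * m ∈ Set.Icc
        (φ' + π - Real.arccos ((Lo ^ 2 + ρ' ^ 2 - (re + ro) ^ 2) / (2 * Lo * ρ')))
        (φ' + π + Real.arccos ((Lo ^ 2 + ρ' ^ 2 - (re + ro) ^ 2) / (2 * Lo * ρ'))) := by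
  intro θ
  have hcenter : xo + Lo • uvec θ - c = ρ' • uvec φ' + Lo • uvec θ := by
    rw [show ρ' • uvec φ' = xo - c from hφ.symm]; abel
  rw [cball_inter_cball_nonempty_iff hre.le hro.le, ← sq_le_sq₀ (enorm2_nonneg _) (by positivity),
    hcenter, enorm2_smul_uvec_add_smul_uvec_sq, sq_add_sq_add_cos_le_sq_iff hρpos hLo h1 h2,
    Real.cos_le_cos_iff_exists_abs_add_le (arccos_nonneg _) (arccos_le_pi _)]
  refine exists_congr fun m => ?_
  rw [abs_le, mem_Icc]
  constructor <;> rintro ⟨hlo, hhi⟩ <;> constructor <;> linarith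

/-- Heading-angle intersection interval: under `|ρ' − L_o| ≤ R ≤ ρ' + L_o`, with
`θ' = arccos((L_o² + ρ'² − R²)/(2 L_o ρ'))`, `θ̲ = φ' + π − θ'` and `θ̄ = φ' + π + θ'`,
the ego circle `B̄(c, r_e)` and the offset object circle `B̄(x_o + L_o·u(θ), r_o)`
intersect iff `θ` lies in `[θ̲, θ̄]` modulo `2π`. -/
theorem contact_angle_interval
    (c xo : ℝ × ℝ) (re ro Lo ρ' φ' : ℝ)
    (hre : 0 < re) (hro : 0 < ro) (hLo : 0 < Lo)
    (hρdef : ρ' = enorm2 (xo - c)) (hρpos : 0 < ρ')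
    (hφ : xo - c = ρ' • (Real.cos φ', Real.sin φ'))
    (h1 : |ρ' - Lo| ≤ re + ro) (h2 : re + ro ≤ ρ' + Lo) :
    ∀ θ : ℝ,
      (cball c re ∩ cball (xo + Lo • uvec θ) ro).Nonempty ↔
      ∃ m : ℤ, θ + 2 * π * m ∈ Set.Icc
        (φ' + π - Real.arccos ((Lo ^ 2 + ρ' ^ 2 - (re + ro) ^ 2) / (2 * Lo * ρ')))
        (φ' + π + Real.arccos ((Lo ^ 2 + ρ' ^ 2 - (re + ro) ^ 2) / (2 * Lo * ρ'))) :=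
  contact_angle_interval_general c xo re ro Lo ρ' φ' hre hro hLo hρpos hφ h1 h2
end
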